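/- arXiv:2107.03689 — 6 statements merged into one kernel-verified Lean document; each statement's English description precedes it below -/
import Mathlib

section
/- Let g(u) = ∫₀ᵘ f(s) ds be an antiderivative of a continuous function f, and let H be a numerical flux satisfying consistency and the monotonicity conditions (non-decreasing in the first argument, non-increasing in the second). Then for all u⁻, u⁺: H(u⁻,u⁺)·(u⁻ − u⁺) − (g(u⁻) − g(u⁺)) ≥ 0. -/
/-- For a consistent monotone numerical flux `H` and `g(u) = ∫₀ᵘ f`,
    there holds `H(u⁻,u⁺)(u⁻ − u⁺) − (g(u⁻) − g(u⁺)) ≥ 0`. -/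
theorem flux_entropy_inequality
    (f : ℝ → ℝ) (hf : Continuous f)
    (g : ℝ → ℝ) (hg : ∀ u : ℝ, g u = ∫ s in (0:ℝ)..u, f s)
    (H : ℝ → ℝ → ℝ)
    (hcons : ∀ u, H u u = f u)
    (hmono1 : ∀ b, Monotone (fun a => H a b))
    (hmono2 : ∀ a, Antitone (fun b => H a b)) :
    ∀ um up : ℝ, 0 ≤ H um up * (um - up) - (g um - g up) := by
  intro um up
  have hint : ∀ a b : ℝ, IntervalIntegrable f MeasureTheory.volume a b := fun a b =>
    hf.intervalIntegrable a b
  have hdiff : g um - g up = ∫ s in up..um, f s := by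
    rw [hg, hg]
    rw [← intervalIntegral.integral_add_adjacent_intervals (hint 0 up) (hint up um)]
    ring
  rw [hdiff]
  rcases le_total up um with h | h
  · have hb : ∀ s ∈ Set.Icc up um, f s ≤ H um up := by
      intro s hs
      calc f s = H s s := (hcons s).symm
        _ ≤ H s up := hmono2 s hs.1
        _ ≤ H um up := hmono1 up hs.2
    have := intervalIntegral.integral_mono_on h (hint up um)
      (intervalIntegrable_const) hb
    rw [intervalIntegral.integral_const] at this
    simp only [smul_eq_mul] at this
    nlinarith
  · have hb : ∀ s ∈ Set.Icc um up, H um up ≤ f s := by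
      intro s hs
      calc H um up ≤ H s up := hmono1 up hs.1
        _ ≤ H s s := hmono2 s hs.2
        _ = f s := hcons s
    have := intervalIntegral.integral_mono_on h
      (intervalIntegrable_const) (hint um up) hb
    rw [intervalIntegral.integral_const] at this
    rw [intervalIntegral.integral_symm um up]
    simp only [smul_eq_mul] at this
    nlinarith
end

section
/- Consider the stabilized first-order update on the small cut cell: u_{k₁}^{n+1} = u_{k₁}^n − (Δt/(αh))·(1−η)·(H(u_{k₁}^n, u_{k₂}^n) − H(u_{k−1}^n, u_{k₁}^n)), with η = 1 − α/ν, 0 < α < ν < 1, Δt = νh/λ_max, and H differentiable with |∂₁H(u,v)| + |∂₂H(w,u)| ≤ νh/Δt for all u,v,w, H non-decreasing in the first argument and non-increasing in the second. Then the update is monotone: the partial derivatives of u_{k₁}^{n+1} with respect to u_{k−1}^n, u_{k₁}^n, and u_{k₂}^n are all nonnegative. -/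
private lemma mono_deriv_nonneg {f : ℝ → ℝ} {d x : ℝ} (hf : Monotone f)
    (hd : HasDerivAt f d x) : 0 ≤ d := by
  have h := hasDerivAt_iff_tendsto_slope.mp hd
  have h' : Filter.Tendsto (slope f x) (nhdsWithin x (Set.Ioi x)) (nhds d) :=
    h.mono_left (nhdsWithin_mono x (fun y hy => ne_of_gt hy))
  refine ge_of_tendsto h' ?_
  filter_upwards [self_mem_nhdsWithin] with y hy
  have : (x : ℝ) < y := hy
  rw [slope_def_field]
  exact div_nonneg (sub_nonneg.2 (hf this.le)) (sub_nonneg.2 this.le)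

private lemma anti_deriv_nonpos {f : ℝ → ℝ} {d x : ℝ} (hf : Antitone f)
    (hd : HasDerivAt f d x) : d ≤ 0 := by
  have : 0 ≤ -d := mono_deriv_nonneg (f := fun y => -f y)
    (fun u v huv => neg_le_neg (hf huv)) hd.neg
  linarith

/-- Monotonicity of the stabilized first-order update on the small cut cell `I_{k₁}`. -/
theorem cut_cell_update_monotone
    (h α ν Δt lammax η : ℝ)
    (hh : 0 < h) (hα : 0 < α) (hαν : α < ν) (hν : ν < 1)
    (hlam : 0 < lammax) (hΔt : Δt = ν * h / lammax)
    (hη : η = 1 - α / ν)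
    (H H1 H2 : ℝ → ℝ → ℝ)
    (hH1 : ∀ a b : ℝ, HasDerivAt (fun x => H x b) (H1 a b) a)
    (hH2 : ∀ a b : ℝ, HasDerivAt (fun y => H a y) (H2 a b) b)
    (hmono1 : ∀ b, Monotone (fun a => H a b))
    (hmono2 : ∀ a, Antitone (fun b => H a b))
    (hbound : ∀ u v w : ℝ, |H1 u v| + |H2 w u| ≤ ν * h / Δt) :
    ∀ a b c : ℝ,
      0 ≤ deriv (fun x => b - Δt / (α * h) * (1 - η) * (H b c - H x b)) a ∧
      0 ≤ deriv (fun x => x - Δt / (α * h) * (1 - η) * (H x c - H a x)) b ∧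
      0 ≤ deriv (fun x => b - Δt / (α * h) * (1 - η) * (H b x - H a b)) c := by
  intro a b c
  have hν0 : 0 < ν := lt_trans hα hαν
  have hΔt0 : 0 < Δt := by
    rw [hΔt]; positivity
  have hC : Δt / (α * h) * (1 - η) = Δt / (ν * h) := by
    rw [hη]
    field_simp
    ring
  have hCpos : 0 < Δt / (ν * h) := by positivity
  -- nonnegativity of H1, nonpositivity of H2
  have hH1nn : ∀ a b : ℝ, 0 ≤ H1 a b := fun a b => by
    exact mono_deriv_nonneg (hmono1 b) (hH1 a b)
  have hH2np : ∀ a b : ℝ, H2 a b ≤ 0 := fun a b => by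
    exact anti_deriv_nonpos (hmono2 a) (hH2 a b)
  refine ⟨?_, ?_, ?_⟩
  · have hd : HasDerivAt (fun x => b - Δt / (α * h) * (1 - η) * (H b c - H x b))
        (-(Δt / (α * h) * (1 - η) * (0 - H1 a b))) a := by
      exact ((hasDerivAt_const a (H b c)).sub (hH1 a b)).const_mul _ |>.const_sub b
    rw [hd.deriv, hC]
    have := hH1nn a b
    nlinarith [hCpos.le]
  · have hd : HasDerivAt (fun x => x - Δt / (α * h) * (1 - η) * (H x c - H a x))
        (1 - Δt / (α * h) * (1 - η) * (H1 b c - H2 a b)) b := by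
      exact (hasDerivAt_id b).sub (((hH1 b c).sub (hH2 a b)).const_mul _)
    rw [hd.deriv, hC]
    have hb := hbound b c a
    have h1 : H1 b c - H2 a b ≤ ν * h / Δt := by
      have := abs_le.mp (le_refl |H1 b c|)
      nlinarith [le_abs_self (H1 b c), neg_abs_le (H2 a b)]
    have hkey : Δt / (ν * h) * (H1 b c - H2 a b) ≤ 1 := by
      have hpos : 0 < ν * h := by positivity
      calc Δt / (ν * h) * (H1 b c - H2 a b) ≤ Δt / (ν * h) * (ν * h / Δt) := by
            exact mul_le_mul_of_nonneg_left h1 hCpos.le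
        _ = 1 := by field_simp
    linarith
  · have hd : HasDerivAt (fun x => b - Δt / (α * h) * (1 - η) * (H b x - H a b))
        (-(Δt / (α * h) * (1 - η) * (H2 b c - 0))) c := by
      exact ((hH2 b c).sub (hasDerivAt_const c (H a b))).const_mul _ |>.const_sub b
    rw [hd.deriv, hC]
    have := hH2np b c
    nlinarith [hCpos.le]
end

section
/- Consider the stabilized first-order update on the left neighbor cell: u_{k−1}^{n+1} = u_{k−1}^n − (Δt/h)·((1−η)H(u_{k−1}^n, u_{k₁}^n) + η H(u_{k−1}^n, u_{k₂}^n) − H(u_{k−2}^n, u_{k−1}^n)), where η ∈ (0,1), Δt, h > 0, H is differentiable, non-decreasing in the first argument, non-increasing in the second argument, and satisfies |∂₁H(u,v)| + |∂₂H(w,u)| ≤ h/Δt for all u,v,w (taking ν ≤ 1). Then all partial derivatives of u_{k−1}^{n+1} with respect to u_{k−2}^n, u_{k−1}^n, u_{k₁}^n, u_{k₂}^n are nonnegative. -/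
/-! The update is monotone in `u_{k-2}`, `u_{k₁}`, `u_{k₂}` simply because `H` is monotone in its
first and antitone in its second argument, so those three partial derivatives are nonnegative
without any differentiation. In `u_{k-1}` the derivative is `1 - (Δt/h) S`, where `S` is a convex
combination (weights `1 - η`, `η`) of `∂₁H(u_{k-1}, u_{kᵢ}) - ∂₂H(u_{k-2}, u_{k-1})`; by the sign
conditions each of these equals `|∂₁H| + |∂₂H| ≤ h/Δt`, so `(Δt/h) S ≤ 1`. -/

lemma one_sub_mul_convex_combination_nonneg {r K η p q m : ℝ} (hr : 0 ≤ r) (hK : r * K ≤ 1)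
    (hη0 : 0 ≤ η) (hη1 : η ≤ 1) (hp : p - m ≤ K) (hq : q - m ≤ K) :
    0 ≤ 1 - r * ((1 - η) * p + η * q - m) := by
  have hS : (1 - η) * p + η * q - m ≤ K := by nlinarith
  nlinarith [mul_le_mul_of_nonneg_left hS hr]

/-- Monotonicity of the stabilized first-order update on the left neighbor `I_{k−1}`. -/
theorem left_neighbor_update_monotone
    (h Δt η : ℝ) (hh : 0 < h) (hΔt : 0 < Δt) (hη0 : 0 < η) (hη1 : η < 1)
    (H H1 H2 : ℝ → ℝ → ℝ)
    (hH1 : ∀ a b : ℝ, HasDerivAt (fun x => H x b) (H1 a b) a)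
    (hH2 : ∀ a b : ℝ, HasDerivAt (fun y => H a y) (H2 a b) b)
    (hmono1 : ∀ b, Monotone (fun a => H a b))
    (hmono2 : ∀ a, Antitone (fun b => H a b))
    (hbound : ∀ u v w : ℝ, |H1 u v| + |H2 w u| ≤ h / Δt) :
    ∀ a b c d : ℝ,
      0 ≤ deriv (fun x => b - Δt / h * ((1 - η) * H b c + η * H b d - H x b)) a ∧
      0 ≤ deriv (fun x => x - Δt / h * ((1 - η) * H x c + η * H x d - H a x)) b ∧
      0 ≤ deriv (fun x => b - Δt / h * ((1 - η) * H b x + η * H b d - H a b)) c ∧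
      0 ≤ deriv (fun x => b - Δt / h * ((1 - η) * H b c + η * H b x - H a b)) d := by
  intro a b c d
  have hr : 0 ≤ Δt / h := by positivity
  have hη : 0 ≤ 1 - η := by linarith
  refine ⟨Monotone.deriv_nonneg fun x y hxy => ?_, ?_,
    Monotone.deriv_nonneg fun x y hxy => ?_, Monotone.deriv_nonneg fun x y hxy => ?_⟩
  · have hHxy := hmono1 b hxy
    dsimp only at hHxy ⊢
    gcongr
  · have hd : HasDerivAt (fun x => x - Δt / h * ((1 - η) * H x c + η * H x d - H a x))
        (1 - Δt / h * ((1 - η) * H1 b c + η * H1 b d - H2 a b)) b :=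
      (hasDerivAt_id b).sub
        (((((hH1 b c).const_mul (1 - η)).add ((hH1 b d).const_mul η)).sub (hH2 a b)).const_mul _)
    have hH1b : ∀ v, |H1 b v| = H1 b v := fun v =>
      abs_of_nonneg ((hH1 b v).nonneg_of_monotone (hmono1 v))
    have hH2ab : |H2 a b| = -H2 a b := abs_of_nonpos ((hH2 a b).nonpos_of_antitone (hmono2 a))
    have hbc := hbound b c a
    have hbd := hbound b d a
    rw [hH1b, hH2ab, ← sub_eq_add_neg] at hbc hbd
    rw [hd.deriv]
    exact one_sub_mul_convex_combination_nonneg hr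
      (by rw [div_mul_div_cancel₀ hh.ne', div_self hΔt.ne']) hη0.le hη1.le hbc hbd
  · have hHxy := hmono2 b hxy
    dsimp only at hHxy ⊢
    gcongr
  · have hHxy := hmono2 b hxy
    dsimp only at hHxy ⊢
    gcongr
end

section
/- Consider the stabilized first-order update on the right cut cell: u_{k₂}^{n+1} = u_{k₂}^n − (Δt/((1−α)h))·(H(u_{k₂}^n, u_{k+1}^n) − (1−η)H(u_{k₁}^n, u_{k₂}^n) − η H(u_{k−1}^n, u_{k₂}^n)), where α ∈ (0,1/2], ν ∈ (0, 1−α), η ∈ (0,1), Δt = νh/λ_max, H differentiable, non-decreasing in the first and non-increasing in the second argument, with |∂₁H(u,v)| + |∂₂H(w,u)| ≤ νh/Δt for all u,v,w. Then all partial derivatives of u_{k₂}^{n+1} with respect to u_{k−1}^n, u_{k₁}^n, u_{k₂}^n, u_{k+1}^n are nonnegative. -/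
/-!
With `K = Δt / ((1 - α) h)`, the update depends monotonically on `u_{k-1}`, `u_{k₁}` and `u_{k+1}`
because `H` is non-decreasing in its first and non-increasing in its second argument and all
weights are nonnegative. The derivative in `u_{k₂}` is `1 - K (∂₁H - ∂₂H)` averaged with
weights `1 - η`, `η` over the two left fluxes, and each such term is nonnegative because
`K (|∂₁H| + |∂₂H|) ≤ K ν h / Δt = ν / (1 - α) < 1`.
-/

lemma one_sub_mul_sub_convex_comb_nonneg {K p q r η : ℝ} (hη0 : 0 ≤ η) (hη1 : η ≤ 1)
    (hq : K * (p - q) ≤ 1) (hr : K * (p - r) ≤ 1) :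
    0 ≤ 1 - K * (p - (1 - η) * q - η * r) := by
  have hsplit : K * (p - (1 - η) * q - η * r) = (1 - η) * (K * (p - q)) + η * (K * (p - r)) := by
    ring
  nlinarith

lemma cut_cell_cfl_number_le_one {Δt h α ν : ℝ} (hh : 0 < h) (hα : 0 < 1 - α)
    (hν : ν ≤ 1 - α) (hΔt : 0 < Δt) :
    Δt / ((1 - α) * h) * (ν * h / Δt) ≤ 1 := by
  calc Δt / ((1 - α) * h) * (ν * h / Δt) = ν / (1 - α) := by field_simp
    _ ≤ 1 := (div_le_one hα).mpr hν

theorem right_cut_cell_update_monotone_general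
    (h α ν Δt lammax η : ℝ)
    (hh : 0 < h) (hν0 : 0 < ν) (hν : ν < 1 - α)
    (hη0 : 0 < η) (hη1 : η < 1)
    (hlam : 0 < lammax) (hΔt : Δt = ν * h / lammax)
    (H H1 H2 : ℝ → ℝ → ℝ)
    (hH1 : ∀ a b : ℝ, HasDerivAt (fun x => H x b) (H1 a b) a)
    (hH2 : ∀ a b : ℝ, HasDerivAt (fun y => H a y) (H2 a b) b)
    (hmono1 : ∀ b, Monotone (fun a => H a b))
    (hmono2 : ∀ a, Antitone (fun b => H a b))
    (hbound : ∀ u v w : ℝ, |H1 u v| + |H2 w u| ≤ ν * h / Δt) :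
    ∀ a b c d : ℝ,
      0 ≤ deriv (fun x => c - Δt / ((1 - α) * h) *
            (H c d - (1 - η) * H b c - η * H x c)) a ∧
      0 ≤ deriv (fun x => c - Δt / ((1 - α) * h) *
            (H c d - (1 - η) * H x c - η * H a c)) b ∧
      0 ≤ deriv (fun x => x - Δt / ((1 - α) * h) *
            (H x d - (1 - η) * H b x - η * H a x)) c ∧
      0 ≤ deriv (fun x => c - Δt / ((1 - α) * h) *
            (H c x - (1 - η) * H b c - η * H a c)) d := by
  have h1α : 0 < 1 - α := hν0.trans hν
  have hΔt0 : 0 < Δt := by rw [hΔt]; positivity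
  set K := Δt / ((1 - α) * h)
  have hK : 0 ≤ K := by positivity
  have hH1_nonneg (u v : ℝ) : 0 ≤ H1 u v := (hH1 u v).deriv ▸ (hmono1 v).deriv_nonneg
  have hH2_nonpos (u v : ℝ) : H2 u v ≤ 0 := (hH2 u v).deriv ▸ (hmono2 u).deriv_nonpos
  have hcfl (u v w : ℝ) : K * (H1 u v - H2 w u) ≤ 1 := by
    have := hbound u v w
    rw [abs_of_nonneg (hH1_nonneg u v), abs_of_nonpos (hH2_nonpos w u)] at this
    exact (mul_le_mul_of_nonneg_left (by linarith) hK).trans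
      (cut_cell_cfl_number_le_one hh h1α hν.le hΔt0)
  intro a b c d
  refine ⟨Monotone.deriv_nonneg fun x y hxy => ?_, Monotone.deriv_nonneg fun x y hxy => ?_,
    ?_, Monotone.deriv_nonneg fun x y hxy => ?_⟩
  · have := hmono1 c hxy
    gcongr
  · have := hmono1 c hxy
    gcongr
  · have hdiag : HasDerivAt (fun x => x - K * (H x d - (1 - η) * H b x - η * H a x))
        (1 - K * (H1 c d - (1 - η) * H2 b c - η * H2 a c)) c :=
      (hasDerivAt_id c).sub
        ((((hH1 c d).sub ((hH2 b c).const_mul (1 - η))).sub ((hH2 a c).const_mul η)).const_mul K)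
    rw [hdiag.deriv]
    exact one_sub_mul_sub_convex_comb_nonneg hη0.le hη1.le (hcfl c d b) (hcfl c d a)
  · have := hmono2 c hxy
    gcongr

/-- Monotonicity of the stabilized first-order update on the right cut cell `I_{k₂}`. -/
theorem right_cut_cell_update_monotone
    (h α ν Δt lammax η : ℝ)
    (hh : 0 < h) (hα0 : 0 < α) (hα : α ≤ 1 / 2) (hν0 : 0 < ν) (hν : ν < 1 - α)
    (hη0 : 0 < η) (hη1 : η < 1)
    (hlam : 0 < lammax) (hΔt : Δt = ν * h / lammax)
    (H H1 H2 : ℝ → ℝ → ℝ)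
    (hH1 : ∀ a b : ℝ, HasDerivAt (fun x => H x b) (H1 a b) a)
    (hH2 : ∀ a b : ℝ, HasDerivAt (fun y => H a y) (H2 a b) b)
    (hmono1 : ∀ b, Monotone (fun a => H a b))
    (hmono2 : ∀ a, Antitone (fun b => H a b))
    (hbound : ∀ u v w : ℝ, |H1 u v| + |H2 w u| ≤ ν * h / Δt) :
    ∀ a b c d : ℝ,
      0 ≤ deriv (fun x => c - Δt / ((1 - α) * h) *
            (H c d - (1 - η) * H b c - η * H x c)) a ∧
      0 ≤ deriv (fun x => c - Δt / ((1 - α) * h) *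
            (H c d - (1 - η) * H x c - η * H a c)) b ∧
      0 ≤ deriv (fun x => x - Δt / ((1 - α) * h) *
            (H x d - (1 - η) * H b x - η * H a x)) c ∧
      0 ≤ deriv (fun x => c - Δt / ((1 - α) * h) *
            (H c x - (1 - η) * H b c - η * H a c)) d :=
  right_cut_cell_update_monotone_general h α ν Δt lammax η hh hν0 hν hη0 hη1 hlam hΔt H H1 H2 hH1
    hH2 hmono1 hmono2 hbound
end

section
/- For the linear advection equation (β = 1, upwind flux), the DoD-stabilized quadratic form satisfies the identity a_h(u,u) + J_h(u,u) = Σ_{j∈I_equi} (1/2)[u]²_{j−1/2} + (1−η)·((1/2)[u]²_{k−1/2} + (1/2)[u]²_{cut}) + η·(1/2)(u_{k₂}(x_cut) − u_{k−1}(x_cut))², where η ∈ (0,1); in particular a_h(u,u) + J_h(u,u) ≥ 0. -/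
/-!
On each cell `∫ u u' = (u(r)² − u(l)²)/2`, so after a cyclic shift of the outflow terms the upwind
form `a_h(u,u)` is exactly `½ Σ_j [u]²_{j−1/2}`. The stabilization integral is again of the form
`∫ v v'` with `v = u_{k−1} − u_{k₁}`, and `v(x_{k−1/2})` is the jump at `x_{k−1/2}`; completing the
square in the remaining point values at `x_cut` gives the identity.
-/

theorem integral_mul_deriv_eq_half_sq_sub {f : ℝ → ℝ} (hf : Differentiable ℝ f)
    (hf' : Continuous (deriv f)) (a b : ℝ) :
    ∫ x in a..b, f x * deriv f x = f b ^ 2 / 2 - f a ^ 2 / 2 := by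
  refine intervalIntegral.integral_eq_sub_of_hasDerivAt (f := fun x ↦ f x ^ 2 / 2) (fun x _ ↦ ?_)
    ((hf.continuous.mul hf').intervalIntegrable a b)
  exact (((hf x).hasDerivAt.fun_pow 2).div_const 2).congr_deriv (by push_cast; ring)

theorem integral_sub_mul_deriv_sub_eq_half_sq_sub {f g : ℝ → ℝ} (hf : Differentiable ℝ f)
    (hg : Differentiable ℝ g) (hf' : Continuous (deriv f)) (hg' : Continuous (deriv g))
    (a b : ℝ) :
    ∫ x in a..b, (f x - g x) * (deriv f x - deriv g x)
      = (f b - g b) ^ 2 / 2 - (f a - g a) ^ 2 / 2 := by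
  have hderiv : deriv (f - g) = deriv f - deriv g := funext fun x ↦ deriv_sub (hf x) (hg x)
  simpa only [hderiv, Pi.sub_apply] using
    integral_mul_deriv_eq_half_sq_sub (hf.sub hg) (hderiv ▸ hf'.sub hg') a b

/-- The upwind form on a periodic mesh, after integrating `u u'` on each cell: `a j` and `b j`
are the values of `u` at the right and left end of cell `j`, and `j - g` is the upwind neighbour. -/
theorem sum_upwind_eq_sum_half_sq_jump {G : Type*} [AddCommGroup G] [Fintype G] (g : G)
    (a b : G → ℝ) :
    ∑ j, (-(a j ^ 2 / 2 - b j ^ 2 / 2) + a j * a j - a (j - g) * b j)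
      = ∑ j, 1 / 2 * (a (j - g) - b j) ^ 2 := by
  have hshift : ∑ j, a j ^ 2 = ∑ j, a (j - g) ^ 2 :=
    (Fintype.sum_equiv (Equiv.subRight g) _ _ fun _ ↦ rfl).symm
  have hsplit : ∀ j, -(a j ^ 2 / 2 - b j ^ 2 / 2) + a j * a j - a (j - g) * b j
      = 1 / 2 * (a (j - g) - b j) ^ 2 + (a j ^ 2 / 2 - a (j - g) ^ 2 / 2) := fun j ↦ by ring
  rw [Finset.sum_congr rfl fun j _ ↦ hsplit j, Finset.sum_add_distrib, Finset.sum_sub_distrib,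
    ← Finset.sum_div, ← Finset.sum_div, hshift, sub_self, add_zero]

/-- For linear advection (`β = 1`, upwind flux) on the cut cell model mesh,
    the DoD-stabilized quadratic form satisfies
    `a_h(u,u) + J_h(u,u) = Σ_{equi edges} ½[u]² + (1−η)(½[u]²_{k−1/2} + ½[u]²_cut)
      + η·½(u_{k₂}(x_cut) − u_{k−1}(x_cut))² ≥ 0`.
    Cell `j` occupies `(l j, r j)`; `κ` is the small cut cell `I_{k₁}`, `κ+1` is
    `I_{k₂}`, `κ−1` is `I_{k−1}`, and `x_cut = r κ`. -/
theorem dod_stabilized_quadratic_form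
    (N : ℕ) [NeZero N] (κ : Fin N)
    (η : ℝ) (hη0 : 0 < η) (hη1 : η < 1)
    (u : Fin N → ℝ → ℝ) (l r : Fin N → ℝ)
    (hu : ∀ j, Differentiable ℝ (u j))
    (hu' : ∀ j, Continuous (deriv (u j)))
    (hmesh1 : l κ = r (κ - 1)) (hmesh2 : l (κ + 1) = r κ) (hκ : κ + 1 ≠ κ) :
    (∑ j : Fin N,
        (-(∫ x in l j..r j, u j x * deriv (u j) x)
          + u j (r j) * u j (r j)
          - u (j - 1) (r (j - 1)) * u j (l j)))
      + (η * (u (κ - 1) (r κ) - u κ (r κ)) * (u κ (r κ) - u (κ + 1) (r κ))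
        + η * ∫ x in l κ..r κ,
            (u (κ - 1) x - u κ x) * (deriv (u (κ - 1)) x - deriv (u κ) x))
    = (∑ j ∈ Finset.univ \ {κ, κ + 1},
        (1 / 2) * (u (j - 1) (r (j - 1)) - u j (l j)) ^ 2)
      + (1 - η) * ((1 / 2) * (u (κ - 1) (r (κ - 1)) - u κ (l κ)) ^ 2
        + (1 / 2) * (u κ (r κ) - u (κ + 1) (l (κ + 1))) ^ 2)
      + η * (1 / 2) * (u (κ + 1) (r κ) - u (κ - 1) (r κ)) ^ 2 ∧
    0 ≤ (∑ j : Fin N,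
        (-(∫ x in l j..r j, u j x * deriv (u j) x)
          + u j (r j) * u j (r j)
          - u (j - 1) (r (j - 1)) * u j (l j)))
      + (η * (u (κ - 1) (r κ) - u κ (r κ)) * (u κ (r κ) - u (κ + 1) (r κ))
        + η * ∫ x in l κ..r κ,
            (u (κ - 1) x - u κ x) * (deriv (u (κ - 1)) x - deriv (u κ) x)) := by
  refine (fun identity ↦ ⟨identity, identity ▸ ?nonneg⟩) ?identity
  case identity =>
    simp only [integral_mul_deriv_eq_half_sq_sub (hu _) (hu' _),
      integral_sub_mul_deriv_sub_eq_half_sq_sub (hu _) (hu _) (hu' _) (hu' _)]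
    rw [sum_upwind_eq_sum_half_sq_jump 1 (fun j ↦ u j (r j)) (fun j ↦ u j (l j)),
      ← Finset.sum_sdiff (Finset.subset_univ {κ, κ + 1}), Finset.sum_pair hκ.symm,
      add_sub_cancel_right, hmesh1, hmesh2]
    ring
  case nonneg =>
    have hη1' : 0 ≤ 1 - η := sub_nonneg.mpr hη1.le
    positivity
end

section
/- Per-cell entropy identity for DG: for a cell I = (x_l, x_r), a polynomial v on I, flux function f with antiderivative g, and numerical flux values H_l, H_r at the two edges, there holds −∫_I f(v) v' dx + H_r·v(x_r) − H_l·v(x_l) = (H_r·v(x_r) − g(v(x_r))) − (H_l·v(x_l) − g(v(x_l))) + H_l·(v(x_l) − w(x_l)) − (g(w(x_l)) − g(v(x_l))) + (g(w(x_l)) − H_l·w(x_l)), where w(x_l) denotes the trace from the left neighbor; equivalently, testing the DG form with the solution itself decomposes into a telescoping flux difference plus the edge term H_l·[u] − [g(u)] at the left edge. -/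
/-- Per-cell entropy identity for DG (Jiang–Shu): testing the DG form with the
    solution decomposes into a telescoping flux difference plus the edge term
    `H_l·[u] − [g(u)]` at the left edge, where `[u] = w(x_l) − v(x_l)`. -/
theorem dg_cell_entropy_identity
    (f : ℝ → ℝ) (hf : Continuous f)
    (g : ℝ → ℝ) (hg : ∀ u : ℝ, HasDerivAt g (f u) u)
    (v : ℝ → ℝ) (hv : Differentiable ℝ v) (hv' : Continuous (deriv v))
    (xl xr : ℝ) (Hl Hr wl : ℝ) :
    -(∫ x in xl..xr, f (v x) * deriv v x) + Hr * v xr - Hl * v xl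
      = (Hr * v xr - g (v xr)) - (Hl * wl - g wl)
        + Hl * (wl - v xl) - (g wl - g (v xl)) := by
  have key : (∫ x in xl..xr, f (v x) * deriv v x) = g (v xr) - g (v xl) := by
    apply intervalIntegral.integral_eq_sub_of_hasDerivAt
    · intro x _
      exact ((hg (v x)).comp x (hv x).hasDerivAt)
    · exact ((hf.comp hv.continuous).mul hv').intervalIntegrable _ _
  rw [key]; ring
end
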